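/- For the Grushin inversion x_i = x̃_i d(z̃,0)^{-2}, y_j = ỹ_j d(z̃,0)^{-2-2γ}, for each fixed j one has Σ_{k=1}^N (∂y_j/∂x̃_k)² + |x̃|^{2γ} Σ_{h=1}^l (∂y_j/∂ỹ_h)² = |x̃|^{2γ} d(z̃,0)^{-4-4γ}. -/

import Mathlib

open MeasureTheory Real

noncomputable section

variable {N l : ℕ}

/-- squared Euclidean norm -/
def nsq {n : ℕ} (x : Fin n → ℝ) : ℝ := ∑ i, x i ^ 2

/-- partial derivative in the `i`-th `x` direction -/
def pdx (u : (Fin N → ℝ) × (Fin l → ℝ) → ℝ) (i : Fin N)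
    (z : (Fin N → ℝ) × (Fin l → ℝ)) : ℝ :=
  deriv (fun t => u (Function.update z.1 i t, z.2)) (z.1 i)

/-- partial derivative in the `j`-th `y` direction -/
def pdy (u : (Fin N → ℝ) × (Fin l → ℝ) → ℝ) (j : Fin l)
    (z : (Fin N → ℝ) × (Fin l → ℝ)) : ℝ :=
  deriv (fun t => u (z.1, Function.update z.2 j t)) (z.2 j)

/-- Grushin operator `Δ_γ u = Δ_x u + |x|^{2γ} Δ_y u` -/
def grushinLap (γ : ℝ) (u : (Fin N → ℝ) × (Fin l → ℝ) → ℝ)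
    (z : (Fin N → ℝ) × (Fin l → ℝ)) : ℝ :=
  (∑ i, pdx (pdx u i) i z) + (nsq z.1) ^ γ * ∑ j, pdy (pdy u j) j z

/-- the Grushin distance to the origin:
`d(z,0) = ((1/(1+γ)²)|x|^{2+2γ} + |y|²)^{1/(2+2γ)}` (note `|x|^{2+2γ} = (nsq x)^{1+γ}`). -/
def gd (γ : ℝ) (z : (Fin N → ℝ) × (Fin l → ℝ)) : ℝ :=
  ((1 / (1 + γ) ^ 2) * (nsq z.1) ^ (1 + γ) + nsq z.2) ^ (1 / (2 + 2 * γ))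

/-- the Grushin inversion `x̃ = x/d², ỹ = y/d^{2+2γ}` -/
def ginv (γ : ℝ) (z : (Fin N → ℝ) × (Fin l → ℝ)) : (Fin N → ℝ) × (Fin l → ℝ) :=
  (fun i => z.1 i / gd γ z ^ 2, fun j => z.2 j / gd γ z ^ (2 + 2 * γ))

/-- divergence of a vector field on `ℝ^N × ℝ^l` -/
def gdiv (X : (Fin N → ℝ) × (Fin l → ℝ) → (Fin N → ℝ) × (Fin l → ℝ))
    (z : (Fin N → ℝ) × (Fin l → ℝ)) : ℝ :=
  (∑ i, pdx (fun w => (X w).1 i) i z) + ∑ j, pdy (fun w => (X w).2 j) j z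

/-- Euclidean dot product on `ℝ^N × ℝ^l` -/
def gdot (v w : (Fin N → ℝ) × (Fin l → ℝ)) : ℝ :=
  (∑ i, v.1 i * w.1 i) + ∑ j, v.2 j * w.2 j

/-! With `A := d(z̃,0)^{2+2γ} = (1+γ)^{-2}|x̃|^{2+2γ} + |ỹ|²` we have `y_j = ỹ_j / A`, so
`∇_x̃ y_j = -(2/(1+γ)) ỹ_j |x̃|^{2γ} x̃ / A²` and `∇_ỹ y_j = e_j / A - 2 ỹ_j ỹ / A²`.
In the sum of squares the terms carrying `ỹ_j²` add up to
`4 ỹ_j² |x̃|^{2γ} ((1+γ)^{-2}|x̃|^{2+2γ} + |ỹ|² - A) / A⁴`, which vanishes by the definition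
of `A`, leaving `|x̃|^{2γ} / A² = |x̃|^{2γ} d(z̃,0)^{-4-4γ}`. -/

lemma nsq_nonneg {n : ℕ} (x : Fin n → ℝ) : 0 ≤ nsq x := by
  unfold nsq; positivity

lemma nsq_pos {n : ℕ} {x : Fin n → ℝ} (hx : x ≠ 0) : 0 < nsq x := by
  obtain ⟨i, hi⟩ := Function.ne_iff.mp hx
  exact Finset.sum_pos' (fun i _ => sq_nonneg _) ⟨i, Finset.mem_univ i, sq_pos_of_ne_zero hi⟩

lemma nsq_update {n : ℕ} (x : Fin n → ℝ) (k : Fin n) (t : ℝ) :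
    nsq (Function.update x k t) = nsq x - x k ^ 2 + t ^ 2 := by
  have h : (fun i => Function.update x k t i ^ 2)
      = Function.update (fun i => x i ^ 2) k (t ^ 2) := by
    ext i; rcases eq_or_ne i k with rfl | h <;> simp [*]
  rw [nsq, h, Finset.sum_update_of_mem (Finset.mem_univ k),
    Finset.sum_sdiff_eq_sub (Finset.subset_univ {k}), Finset.sum_singleton, nsq]
  ring

lemma hasDerivAt_nsq_update {n : ℕ} (x : Fin n → ℝ) (k : Fin n) :
    HasDerivAt (fun t => nsq (Function.update x k t)) (2 * x k) (x k) := by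
  simp only [nsq_update]
  simpa using ((hasDerivAt_pow 2 (x k)).const_add (nsq x - x k ^ 2))

lemma sum_sq_mul {n : ℕ} (c : ℝ) (v : Fin n → ℝ) :
    ∑ k, (c * v k) ^ 2 = c ^ 2 * nsq v := by
  simp only [mul_pow, ← Finset.mul_sum, nsq]

lemma sum_sq_single_sub_mul {n : ℕ} (j : Fin n) (a b : ℝ) (v : Fin n → ℝ) :
    ∑ h, ((Pi.single j a : Fin n → ℝ) h - b * v h) ^ 2
      = a ^ 2 - 2 * a * b * v j + b ^ 2 * nsq v := by
  have hterm : ∀ h, ((Pi.single j a : Fin n → ℝ) h - b * v h) ^ 2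
      = (Pi.single j (a ^ 2 - 2 * a * b * v j) : Fin n → ℝ) h + b ^ 2 * v h ^ 2 := by
    intro h
    rcases eq_or_ne h j with rfl | hj
    · rw [Pi.single_eq_same, Pi.single_eq_same]; ring
    · rw [Pi.single_eq_of_ne hj, Pi.single_eq_of_ne hj]; ring
  simp only [hterm, Finset.sum_add_distrib, Finset.sum_pi_single', Finset.mem_univ, if_true,
    ← Finset.mul_sum, nsq]

def gdPow (γ : ℝ) (z : (Fin N → ℝ) × (Fin l → ℝ)) : ℝ :=
  (1 / (1 + γ) ^ 2) * (nsq z.1) ^ (1 + γ) + nsq z.2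

section

variable {γ : ℝ}

lemma gdPow_pos (hγ : 1 + γ ≠ 0) (z : (Fin N → ℝ) × (Fin l → ℝ)) (hx : z.1 ≠ 0) :
    0 < gdPow γ z := by
  have := Real.rpow_pos_of_pos (nsq_pos hx) (1 + γ)
  have := nsq_nonneg z.2
  have : 0 < (1 + γ) ^ 2 := by positivity
  unfold gdPow; positivity

lemma gdPow_nonneg (z : (Fin N → ℝ) × (Fin l → ℝ)) : 0 ≤ gdPow γ z := by
  have := Real.rpow_nonneg (nsq_nonneg z.1) (1 + γ)
  have := nsq_nonneg z.2
  unfold gdPow; positivity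

lemma gd_rpow_two_add_two_mul (hγ : 1 + γ ≠ 0) (z : (Fin N → ℝ) × (Fin l → ℝ)) :
    gd γ z ^ (2 + 2 * γ) = gdPow γ z := by
  rw [gd, ← gdPow, ← Real.rpow_mul (gdPow_nonneg z),
    one_div_mul_cancel (by contrapose! hγ; linarith), Real.rpow_one]

lemma gd_rpow_neg_four_sub_four_mul (hγ : 1 + γ ≠ 0) (z : (Fin N → ℝ) × (Fin l → ℝ)) :
    gd γ z ^ (-4 - 4 * γ) = (gdPow γ z ^ 2)⁻¹ := by
  have hgd : 0 ≤ gd γ z := Real.rpow_nonneg (gdPow_nonneg z) _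
  rw [show -4 - 4 * γ = (2 + 2 * γ) * (-2) by ring, Real.rpow_mul hgd,
    gd_rpow_two_add_two_mul hγ, Real.rpow_neg_ofNat, zpow_neg, zpow_ofNat]

lemma ginv_snd_apply (hγ : 1 + γ ≠ 0) (w : (Fin N → ℝ) × (Fin l → ℝ)) (j : Fin l) :
    (ginv γ w).2 j = w.2 j / gdPow γ w := by
  rw [ginv, gd_rpow_two_add_two_mul hγ]

lemma hasDerivAt_gdPow_update_fst (hγ : 1 + γ ≠ 0) (z : (Fin N → ℝ) × (Fin l → ℝ))
    (hx : z.1 ≠ 0) (k : Fin N) :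
    HasDerivAt (fun t => gdPow γ (Function.update z.1 k t, z.2))
      (2 / (1 + γ) * nsq z.1 ^ γ * z.1 k) (z.1 k) := by
  have hpow := (hasDerivAt_nsq_update z.1 k).rpow_const (p := 1 + γ)
    (by simpa using Or.inl (nsq_pos hx).ne')
  refine ((hpow.const_mul (1 / (1 + γ) ^ 2)).add_const (nsq z.2)).congr_deriv ?_
  rw [Function.update_eq_self, add_sub_cancel_left]
  field_simp

lemma hasDerivAt_gdPow_update_snd (z : (Fin N → ℝ) × (Fin l → ℝ)) (h : Fin l) :
    HasDerivAt (fun t => gdPow γ (z.1, Function.update z.2 h t)) (2 * z.2 h) (z.2 h) :=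
  (hasDerivAt_nsq_update z.2 h).const_add (1 / (1 + γ) ^ 2 * nsq z.1 ^ (1 + γ))

lemma pdx_ginv_snd (hγ : 1 + γ ≠ 0) (z : (Fin N → ℝ) × (Fin l → ℝ)) (hx : z.1 ≠ 0)
    (j : Fin l) (k : Fin N) :
    pdx (fun w => (ginv γ w).2 j) k z
      = -(2 / (1 + γ) * nsq z.1 ^ γ * z.2 j / gdPow γ z ^ 2) * z.1 k := by
  have hA := gdPow_pos hγ z hx
  have hd := (hasDerivAt_const (z.1 k) (z.2 j)).div (hasDerivAt_gdPow_update_fst hγ z hx k)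
    (by rw [Function.update_eq_self]; exact hA.ne')
  simp only [pdx, ginv_snd_apply hγ]
  refine hd.deriv.trans ?_
  rw [Function.update_eq_self]
  field_simp
  ring

lemma pdy_ginv_snd (hγ : 1 + γ ≠ 0) (z : (Fin N → ℝ) × (Fin l → ℝ)) (hx : z.1 ≠ 0)
    (j h : Fin l) :
    pdy (fun w => (ginv γ w).2 j) h z
      = (Pi.single j (1 / gdPow γ z) : Fin l → ℝ) h - 2 * z.2 j / gdPow γ z ^ 2 * z.2 h := by
  have hA := gdPow_pos hγ z hx
  have hd := (hasDerivAt_pi.1 (hasDerivAt_update z.2 h (z.2 h)) j).div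
    (hasDerivAt_gdPow_update_snd z h) (by rw [Function.update_eq_self]; exact hA.ne')
  simp only [pdy, ginv_snd_apply hγ]
  refine hd.deriv.trans ?_
  rw [Function.update_eq_self, Pi.single_comm]
  rcases eq_or_ne h j with rfl | hj
  · simp only [Pi.single_eq_same]; field_simp
  · simp only [Pi.single_eq_of_ne hj]; field_simp; ring

end

/-- for the Grushin inversion `y_j = ỹ_j d(z̃,0)^{-2-2γ}`,
`Σ_k (∂y_j/∂x̃_k)² + |x̃|^{2γ} Σ_h (∂y_j/∂ỹ_h)² = |x̃|^{2γ} d(z̃,0)^{-4-4γ}`. -/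
theorem ginv_jacobian_y_diag (γ : ℝ) (hγ : 0 ≤ γ)
    (z : (Fin N → ℝ) × (Fin l → ℝ)) (hx : z.1 ≠ 0) (j : Fin l) :
    (∑ k, pdx (fun w => (ginv γ w).2 j) k z ^ 2)
        + (nsq z.1) ^ γ * ∑ h, pdy (fun w => (ginv γ w).2 j) h z ^ 2
      = (nsq z.1) ^ γ * gd γ z ^ (-4 - 4 * γ) := by
  have hγ1 : 1 + γ ≠ 0 := by positivity
  have hA := gdPow_pos hγ1 z hx
  simp only [pdx_ginv_snd hγ1 z hx, pdy_ginv_snd hγ1 z hx, sum_sq_mul,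
    sum_sq_single_sub_mul, gd_rpow_neg_four_sub_four_mul hγ1]
  have hX : nsq z.1 ^ γ * nsq z.1 = (1 + γ) ^ 2 * (gdPow γ z - nsq z.2) := by
    rw [gdPow, ← Real.rpow_add_one (nsq_pos hx).ne', add_comm γ 1]
    field_simp
    ring
  field_simp
  linear_combination 4 * nsq z.1 ^ γ * z.2 j ^ 2 * hX
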